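/- Let Λ be a positive semidefinite Hermitian n×n matrix with trace 1, and let Θ(Λ) := ∫_{-π}^{π} Λ^{1/2} G(e^{jθ}) (Ψ(e^{jθ}) / (G(e^{jθ})* Λ G(e^{jθ}))) G(e^{jθ})* Λ^{1/2} dθ/(2π), where G(z) = (zI - A)^{-1}B, Ψ is a continuous strictly positive function on the unit circle with ∫Ψ dθ/(2π) = 1, and G*ΛG > 0 on the unit circle. Then Θ(Λ) is positive semidefinite Hermitian with trace 1. -/

import Mathlib

open Matrix MeasureTheory Real Filter
open scoped ComplexOrder

noncomputable section

abbrev Mat (n : ℕ) := Matrix (Fin n) (Fin n) ℂ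
abbrev Vec (n : ℕ) := Matrix (Fin n) (Fin 1) ℂ

/-- the point e^{jθ} on the unit circle -/
def circPt (θ : ℝ) : ℂ := Complex.exp (θ * Complex.I)

/-- G(e^{jθ}) = (e^{jθ} I - A)⁻¹ B -/
def Gm {n : ℕ} (A : Mat n) (B : Vec n) (θ : ℝ) : Vec n :=
  (circPt θ • (1 : Mat n) - A)⁻¹ * B

/-- the scalar G* Λ G at e^{jθ} -/
def quad {n : ℕ} (A : Mat n) (B : Vec n) (Λ : Mat n) (θ : ℝ) : ℂ :=
  ((Gm A B θ)ᴴ * Λ * Gm A B θ) 0 0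

/-- normalized entrywise matrix integral over the unit circle -/
def mInt {n : ℕ} (f : ℝ → Mat n) : Mat n :=
  Matrix.of fun i j => (1 / (2 * π) : ℝ) • ∫ θ in (0:ℝ)..(2 * π), f θ i j

/-- normalized scalar (complex) integral over the unit circle -/
def sInt (f : ℝ → ℂ) : ℂ := (1 / (2 * π) : ℝ) • ∫ θ in (0:ℝ)..(2 * π), f θ

/-- normalized scalar (real) integral over the unit circle -/
def sIntR (f : ℝ → ℝ) : ℝ := (1 / (2 * π)) * ∫ θ in (0:ℝ)..(2 * π), f θ

/-- all eigenvalues of A lie in the open unit disc -/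
def IsStable {n : ℕ} (A : Mat n) : Prop := ∀ μ ∈ spectrum ℂ A, ‖μ‖ < 1

/-- (A,B) is a reachable pair: the controllability matrix has full rank -/
def Reachable {n : ℕ} (A : Mat n) (B : Vec n) : Prop :=
  (Matrix.of fun (i : Fin n) (k : Fin n) => (A ^ (k : ℕ) * B) i 0).rank = n

open scoped Classical in
/-- positive semidefinite square root (junk value 0 off the psd cone) -/
def msqrt {n : ℕ} (M : Mat n) : Mat n :=
  if h : M.PosSemidef then
    h.1.eigenvectorUnitary.1 * diagonal ((↑) ∘ (√·) ∘ h.1.eigenvalues) *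
      (star h.1.eigenvectorUnitary : Mat n)
  else 0

/-- the moment map ∫ G (Ψ/(G*ΛG)) G* -/
def moment {n : ℕ} (A : Mat n) (B : Vec n) (Ψ : ℝ → ℝ) (Λ : Mat n) : Mat n :=
  mInt (fun θ => ((Ψ θ : ℂ) / quad A B Λ θ) • (Gm A B θ * (Gm A B θ)ᴴ))

/-- the iteration map Θ(Λ) = ∫ Λ^{1/2} G (Ψ/(G*ΛG)) G* Λ^{1/2} -/
def Theta {n : ℕ} (A : Mat n) (B : Vec n) (Ψ : ℝ → ℝ) (Λ : Mat n) : Mat n :=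
  mInt (fun θ => ((Ψ θ : ℂ) / quad A B Λ θ) •
    (msqrt Λ * (Gm A B θ * (Gm A B θ)ᴴ) * msqrt Λ))

/-- the linearization M of Θ at Λ:
M(X) = X - Λ^{1/2} ∫ (GΨG*/(G*ΛG)) (G*XG/(G*ΛG)) Λ^{1/2} -/
def Mlin {n : ℕ} (A : Mat n) (B : Vec n) (Ψ : ℝ → ℝ) (Λ : Mat n) (X : Mat n) : Mat n :=
  X - msqrt Λ * mInt (fun θ =>
    (((Ψ θ : ℂ) * (((Gm A B θ)ᴴ * X * Gm A B θ) 0 0)) / (quad A B Λ θ) ^ 2) •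
      (Gm A B θ * (Gm A B θ)ᴴ)) * msqrt Λ

/-- the range of the operator Γ : Φ ↦ ∫ G Φ G* on continuous (2π-periodic) functions -/
def RangeGamma {n : ℕ} (A : Mat n) (B : Vec n) : Set (Mat n) :=
  {M | ∃ Φ : ℝ → ℝ, Continuous Φ ∧ (∀ θ, Φ (θ + 2 * π) = Φ θ) ∧
    M = mInt (fun θ => (Φ θ : ℂ) • (Gm A B θ * (Gm A B θ)ᴴ))}

/-! With `S = Λ^{1/2}`, the integrand of `Θ(Λ)` is the nonnegative multiple `Ψ / (G*ΛG)` of the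
rank-one positive semidefinite matrix `(S G)(S G)*`, so its average over the circle is positive
semidefinite. By cyclicity of the trace, `tr (S G G* S) = G* S S G = G*ΛG`, so the integrand has
trace `Ψ` and `tr Θ(Λ)` is the average of `Ψ`, which is `1`. -/

section EntrywiseIntegral

open intervalIntegral

variable {ι : Type*} [Fintype ι] {f : ℝ → Matrix ι ι ℂ} {a b : ℝ}

lemma star_dotProduct_mulVec_entrywise_integral
    (hf : ∀ i j, IntervalIntegrable (fun θ => f θ i j) volume a b) (x : ι → ℂ) :
    star x ⬝ᵥ (of fun i j => ∫ θ in a..b, f θ i j) *ᵥ x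
      = ∫ θ in a..b, star x ⬝ᵥ f θ *ᵥ x := by
  have hrow (i : ι) : IntervalIntegrable (fun θ => ∑ j, f θ i j * x j) volume a b := by
    simpa only [Finset.sum_fn] using IntervalIntegrable.sum _ fun j _ => (hf i j).mul_const (x j)
  simp only [dotProduct, mulVec, of_apply, Pi.star_apply]
  rw [integral_finsetSum fun i _ => (hrow i).const_mul _]
  refine Finset.sum_congr rfl fun i _ => ?_
  rw [intervalIntegral.integral_const_mul, integral_finsetSum fun j _ => (hf i j).mul_const _]
  simp only [intervalIntegral.integral_mul_const]

lemma posSemidef_entrywise_integral (hab : a ≤ b)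
    (hf : ∀ i j, IntervalIntegrable (fun θ => f θ i j) volume a b)
    (hpsd : ∀ θ, (f θ).PosSemidef) :
    (of fun i j => ∫ θ in a..b, f θ i j).PosSemidef := by
  refine .of_dotProduct_mulVec_nonneg ?_ fun x => ?_
  · ext i j
    rw [conjTranspose_apply, of_apply, of_apply, Complex.star_def, ← intervalIntegral_conj]
    exact integral_congr fun θ _ => (hpsd θ).1.apply i j
  · rw [star_dotProduct_mulVec_entrywise_integral hf, integral_of_le hab]
    exact integral_nonneg fun θ => (hpsd θ).dotProduct_mulVec_nonneg x

lemma trace_entrywise_integral (hf : ∀ i j, IntervalIntegrable (fun θ => f θ i j) volume a b) :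
    (of fun i j => ∫ θ in a..b, f θ i j).trace = ∫ θ in a..b, (f θ).trace := by
  simp only [trace, diag_apply, of_apply]
  exact (integral_finsetSum fun i _ => hf i i).symm

end EntrywiseIntegral

section CircleAverage

variable {n : ℕ} {f : ℝ → Mat n}

lemma mInt_eq_smul :
    mInt f = (1 / (2 * π) : ℝ) • of fun i j => ∫ θ in (0:ℝ)..(2 * π), f θ i j :=
  rfl

lemma mInt_posSemidef (hf : ∀ i j, IntervalIntegrable (fun θ => f θ i j) volume 0 (2 * π))
    (hpsd : ∀ θ, (f θ).PosSemidef) : (mInt f).PosSemidef := by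
  rw [mInt_eq_smul]
  exact (posSemidef_entrywise_integral (by positivity) hf hpsd).smul (by positivity)

lemma trace_mInt (hf : ∀ i j, IntervalIntegrable (fun θ => f θ i j) volume 0 (2 * π)) :
    (mInt f).trace = sInt fun θ => (f θ).trace := by
  rw [mInt_eq_smul, trace_smul, trace_entrywise_integral hf, sInt]

lemma sInt_ofReal (g : ℝ → ℝ) : sInt (fun θ => (g θ : ℂ)) = (sIntR g : ℂ) := by
  rw [sInt, intervalIntegral.integral_ofReal, sIntR, Complex.real_smul, Complex.ofReal_mul]

end CircleAverage

section SquareRoot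

open scoped MatrixOrder

variable {n : ℕ} {M : Mat n}

lemma msqrt_eq_cfcSqrt (hM : M.PosSemidef) : msqrt M = CFC.sqrt M := by
  rw [CFC.sqrt_eq_real_sqrt M hM.nonneg, cfcₙ_eq_cfc, hM.1.cfc_eq, IsHermitian.cfc,
    Unitary.conjStarAlgAut_apply, msqrt, dif_pos hM]
  rfl

lemma msqrt_isHermitian (hM : M.PosSemidef) : (msqrt M).IsHermitian := by
  rw [msqrt_eq_cfcSqrt hM]
  exact (CFC.sqrt_nonneg M).posSemidef.1

lemma msqrt_mul_self (hM : M.PosSemidef) : msqrt M * msqrt M = M := by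
  rw [msqrt_eq_cfcSqrt hM]
  exact CFC.sqrt_mul_sqrt_self M hM.nonneg

end SquareRoot

lemma trace_mul_mul_mul_self {m R : Type*} [Fintype m] [CommRing R] {S Λ : Matrix m m R}
    (hS : S * S = Λ) (G : Matrix m (Fin 1) R) (H : Matrix (Fin 1) m R) :
    (S * (G * H) * S).trace = (H * Λ * G) 0 0 := by
  rw [trace_mul_cycle, hS, ← Matrix.mul_assoc, trace_mul_cycle, trace_fin_one]

section Transfer

variable {n : ℕ} {A : Mat n}

lemma norm_circPt (θ : ℝ) : ‖circPt θ‖ = 1 := by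
  simp [circPt, Complex.norm_exp]

lemma det_circPt_smul_one_sub_ne_zero (hA : IsStable A) (θ : ℝ) :
    (circPt θ • (1 : Mat n) - A).det ≠ 0 := by
  intro hdet
  have hmem : circPt θ ∈ spectrum ℂ A := by
    rw [spectrum.mem_iff, Algebra.algebraMap_eq_smul_one, isUnit_iff_isUnit_det, hdet]
    exact not_isUnit_zero
  simpa [norm_circPt] using hA _ hmem

lemma continuous_Gm (hA : IsStable A) (B : Vec n) : Continuous (Gm A B) := by
  have hM : Continuous fun θ => circPt θ • (1 : Mat n) - A :=
    ((Complex.continuous_exp.comp (by fun_prop)).smul continuous_const).sub continuous_const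
  have hinv : Continuous fun θ => (circPt θ • (1 : Mat n) - A)⁻¹ := by
    simp only [inv_def, Ring.inverse_eq_inv']
    exact (hM.matrix_det.inv₀ (det_circPt_smul_one_sub_ne_zero hA)).smul hM.matrix_adjugate
  exact hinv.matrix_mul continuous_const

lemma quad_nonneg (B : Vec n) {Λ : Mat n} (hΛ : Λ.PosSemidef) (θ : ℝ) :
    0 ≤ quad A B Λ θ :=
  (hΛ.conjTranspose_mul_mul_same (Gm A B θ)).diag_nonneg

lemma continuous_quad (hA : IsStable A) (B : Vec n) (Λ : Mat n) : Continuous (quad A B Λ) := by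
  have hG := continuous_Gm hA B
  exact ((hG.matrix_conjTranspose.matrix_mul continuous_const).matrix_mul hG).matrix_elem 0 0

end Transfer

section ThetaIntegrand

variable {n : ℕ} {A : Mat n} {B : Vec n} {Ψ : ℝ → ℝ} {Λ : Mat n}

lemma continuous_Theta_integrand (hA : IsStable A) (hΨc : Continuous Ψ)
    (hq : ∀ θ, quad A B Λ θ ≠ 0) :
    Continuous fun θ => ((Ψ θ : ℂ) / quad A B Λ θ) •
      (msqrt Λ * (Gm A B θ * (Gm A B θ)ᴴ) * msqrt Λ) := by
  have hG := continuous_Gm hA B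
  exact ((Complex.continuous_ofReal.comp hΨc).div (continuous_quad hA B Λ) hq).smul
    ((continuous_const.matrix_mul (hG.matrix_mul hG.matrix_conjTranspose)).matrix_mul
      continuous_const)

lemma posSemidef_Theta_integrand (hΨpos : ∀ θ, 0 < Ψ θ) (hΛ : Λ.PosSemidef)
    (hq : ∀ θ, 0 < quad A B Λ θ) (θ : ℝ) :
    (((Ψ θ : ℂ) / quad A B Λ θ) • (msqrt Λ * (Gm A B θ * (Gm A B θ)ᴴ) * msqrt Λ)).PosSemidef := by
  have hGG := (posSemidef_self_mul_conjTranspose (Gm A B θ)).mul_mul_conjTranspose_same (msqrt Λ)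
  rw [msqrt_isHermitian hΛ] at hGG
  exact hGG.smul (div_nonneg (Complex.zero_le_real.mpr (hΨpos θ).le) (hq θ).le)

lemma trace_Theta_integrand (hΛ : Λ.PosSemidef) (hq : ∀ θ, quad A B Λ θ ≠ 0) (θ : ℝ) :
    (((Ψ θ : ℂ) / quad A B Λ θ) • (msqrt Λ * (Gm A B θ * (Gm A B θ)ᴴ) * msqrt Λ)).trace
      = Ψ θ := by
  rw [trace_smul, trace_mul_mul_mul_self (msqrt_mul_self hΛ), smul_eq_mul]
  exact div_mul_cancel₀ _ (hq θ)

end ThetaIntegrand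

theorem stmt1_general {n : ℕ} (A : Mat n) (B : Vec n) (Ψ : ℝ → ℝ) (Λ : Mat n)
    (hA : IsStable A)
    (hΨc : Continuous Ψ) (hΨpos : ∀ θ, 0 < Ψ θ) (hΨnorm : sIntR Ψ = 1)
    (hΛ : Λ.PosSemidef)
    (hq : ∀ θ, 0 < (quad A B Λ θ).re) :
    (Theta A B Ψ Λ).PosSemidef ∧ (Theta A B Ψ Λ).trace = 1 := by
  have hq_pos : ∀ θ, 0 < quad A B Λ θ := fun θ =>
    Complex.lt_def.mpr ⟨hq θ, (Complex.nonneg_iff.mp (quad_nonneg B hΛ θ)).2⟩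
  have hq_ne : ∀ θ, quad A B Λ θ ≠ 0 := fun θ => (hq_pos θ).ne'
  have hint := fun i j =>
    ((continuous_Theta_integrand hA hΨc hq_ne).matrix_elem i j).intervalIntegrable
      (μ := volume) 0 (2 * π)
  refine ⟨mInt_posSemidef hint (posSemidef_Theta_integrand hΨpos hΛ hq_pos), ?_⟩
  rw [Theta, trace_mInt hint, funext (trace_Theta_integrand hΛ hq_ne), sInt_ofReal, hΨnorm,
    Complex.ofReal_one]

/-- Θ maps density matrices to density matrices. -/
theorem stmt1 {n : ℕ} (A : Mat n) (B : Vec n) (Ψ : ℝ → ℝ) (Λ : Mat n)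
    (hA : IsStable A) (hR : Reachable A B)
    (hΨc : Continuous Ψ) (hΨpos : ∀ θ, 0 < Ψ θ) (hΨnorm : sIntR Ψ = 1)
    (hΛ : Λ.PosSemidef) (htr : Λ.trace = 1)
    (hq : ∀ θ, 0 < (quad A B Λ θ).re) :
    (Theta A B Ψ Λ).PosSemidef ∧ (Theta A B Ψ Λ).trace = 1 :=
  stmt1_general A B Ψ Λ hA hΨc hΨpos hΨnorm hΛ hq
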